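/- Let f : ℝⁿ → ℝ be continuously differentiable with L-Lipschitz gradient, and let e be a unit vector, y, x ∈ ℝⁿ, ᾱ > 0, C > 0. If f(y + ᾱe) > f(y) − C·ᾱ² and f(y − ᾱe) > f(y) − C·ᾱ², then |∇f(x)ᵀe| < (C + L)·ᾱ + L·‖x − y‖. -/

import Mathlib

/-!
Apply the mean value inequality to `z ↦ f z - ⟪∇f y, z⟫`, whose gradient `∇f z - ∇f y` is at most
`L‖v‖` on the segment `[y, y + v]`: the first-order Taylor error of `f` is at most `L‖v‖²`.
At `v = ±ᾱe` the two failed sufficient-decrease tests then pin `⟪∇f y, e⟫` within `(C + L)ᾱ` of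
zero, and the Lipschitz gradient moves this bound from `y` to `x` at cost `L‖x - y‖`.
-/

open RealInnerProductSpace

section

variable {E : Type*} [NormedAddCommGroup E] [InnerProductSpace ℝ E] [CompleteSpace E]
  {f : E → ℝ} {L : ℝ}

theorem abs_sub_sub_inner_gradient_le (hf : Differentiable ℝ f) (hL : 0 ≤ L)
    (hlip : ∀ x y, ‖gradient f x - gradient f y‖ ≤ L * ‖x - y‖) (y v : E) :
    |f (y + v) - f y - ⟪gradient f y, v⟫| ≤ L * ‖v‖ ^ 2 := by
  set g := gradient f y
  have hderiv : ∀ z, HasFDerivAt (fun z => f z - ⟪g, z⟫)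
      (InnerProductSpace.toDual ℝ E (gradient f z - g)) z := by
    intro z
    rw [map_sub]
    exact (hf z).hasGradientAt.hasFDerivAt.sub (InnerProductSpace.toDual ℝ E g).hasFDerivAt
  have hbound : ∀ z ∈ segment ℝ y (y + v),
      ‖InnerProductSpace.toDual ℝ E (gradient f z - g)‖ ≤ L * ‖v‖ := by
    intro z hz
    rw [LinearIsometryEquiv.norm_map]
    calc ‖gradient f z - g‖ ≤ L * ‖z - y‖ := hlip z y
      _ ≤ L * ‖v‖ := by
        gcongr
        simpa using norm_sub_le_of_mem_segment hz
  have hmvt := (convex_segment y (y + v)).norm_image_sub_le_of_norm_hasFDerivWithin_le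
    (fun z _ => (hderiv z).hasFDerivWithinAt) hbound (left_mem_segment ℝ _ _)
    (right_mem_segment ℝ _ _)
  rw [Real.norm_eq_abs, inner_add_right, add_sub_cancel_left] at hmvt
  calc |f (y + v) - f y - ⟪g, v⟫| = |f (y + v) - (⟪g, y⟫ + ⟪g, v⟫) - (f y - ⟪g, y⟫)| := by ring_nf
    _ ≤ L * ‖v‖ * ‖v‖ := hmvt
    _ = L * ‖v‖ ^ 2 := by ring

theorem abs_inner_gradient_lt_of_not_sufficient_decrease (hf : Differentiable ℝ f) (hL : 0 ≤ L)
    (hlip : ∀ x y, ‖gradient f x - gradient f y‖ ≤ L * ‖x - y‖) {y e : E} (he : ‖e‖ = 1)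
    {α C : ℝ} (hα : 0 < α) (hplus : f (y + α • e) > f y - C * α ^ 2)
    (hminus : f (y - α • e) > f y - C * α ^ 2) :
    |⟪gradient f y, e⟫| < (C + L) * α := by
  have hnorm : ‖α • e‖ ^ 2 = α ^ 2 := by rw [norm_smul, he, mul_one, Real.norm_eq_abs, sq_abs]
  have htaylor_plus := abs_sub_sub_inner_gradient_le hf hL hlip y (α • e)
  have htaylor_minus := abs_sub_sub_inner_gradient_le hf hL hlip y (-(α • e))
  rw [hnorm, real_inner_smul_right] at htaylor_plus
  rw [norm_neg, hnorm, inner_neg_right, real_inner_smul_right, ← sub_eq_add_neg] at htaylor_minus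
  have hα_mul : α * |⟪gradient f y, e⟫| < α * ((C + L) * α) := by
    rw [← abs_of_pos hα, ← abs_mul, abs_of_pos hα, abs_lt]
    constructor <;> linarith [abs_le.mp htaylor_plus, abs_le.mp htaylor_minus]
  exact lt_of_mul_lt_mul_left hα_mul hα.le

end

theorem stmt_13_general {n : ℕ} (f : EuclideanSpace ℝ (Fin n) → ℝ) (L : ℝ)
    (hf : ContDiff ℝ 1 f)
    (hlip : ∀ x y, ‖gradient f x - gradient f y‖ ≤ L * ‖x - y‖)
    (y x e : EuclideanSpace ℝ (Fin n)) (he : ‖e‖ = 1)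
    (α C : ℝ) (hα : 0 < α)
    (hfailp : f (y + α • e) > f y - C * α ^ 2)
    (hfailm : f (y - α • e) > f y - C * α ^ 2) :
    |⟪gradient f x, e⟫| < (C + L) * α + L * ‖x - y‖ := by
  have hL : 0 ≤ L := by
    simpa [he] using (norm_nonneg _).trans (hlip (y + e) y)
  have hy := abs_inner_gradient_lt_of_not_sufficient_decrease (hf.differentiable one_ne_zero) hL
    hlip he hα hfailp hfailm
  have hshift : |⟪gradient f x - gradient f y, e⟫| ≤ L * ‖x - y‖ :=
    calc |⟪gradient f x - gradient f y, e⟫| ≤ ‖gradient f x - gradient f y‖ * ‖e‖ :=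
          abs_real_inner_le_norm _ _
      _ ≤ L * ‖x - y‖ := by rw [he, mul_one]; exact hlip x y
  rw [inner_sub_left] at hshift
  linarith [abs_sub_abs_le_abs_sub ⟪gradient f x, e⟫ ⟪gradient f y, e⟫]

theorem stmt_13 {n : ℕ} (f : EuclideanSpace ℝ (Fin n) → ℝ) (L : ℝ)
    (hf : ContDiff ℝ 1 f)
    (hlip : ∀ x y, ‖gradient f x - gradient f y‖ ≤ L * ‖x - y‖)
    (y x e : EuclideanSpace ℝ (Fin n)) (he : ‖e‖ = 1)
    (α C : ℝ) (hα : 0 < α) (hC : 0 < C)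
    (hfailp : f (y + α • e) > f y - C * α ^ 2)
    (hfailm : f (y - α • e) > f y - C * α ^ 2) :
    |⟪gradient f x, e⟫| < (C + L) * α + L * ‖x - y‖ :=
  stmt_13_general f L hf hlip y x e he α C hα hfailp hfailm
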